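/- arXiv:2502.16956 — 3 statements merged into one kernel-verified Lean document; each statement's English description precedes it below -/
import Mathlib

section
/- Given a short exact sequence of groups 1 → G1 → G → G2 → 1, if G2 has bounded finite subgroups with bound Bd(G2) and G1 is Jordan with constant J(G1), then G is Jordan with constant at most Bd(G2) · J(G1). -/
/-- Given an exact sequence `1 → G₁ → G → G₂ → 1`, if `G₂` has finite subgroups of order
at most `b` and `G₁` is Jordan with constant `J`, then `G` is Jordan with constant `b * J`. -/
theorem stmt1 (G₁ G G₂ : Type*) [Group G₁] [Group G] [Group G₂]
    (f : G₁ →* G) (g : G →* G₂) (hf : Function.Injective f)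
    (hg : Function.Surjective g) (hexact : f.range = g.ker)
    (b J : ℕ)
    (hBd : ∀ F : Subgroup G₂, Finite F → Nat.card F ≤ b)
    (hJ : ∀ H : Subgroup G₁, Finite H →
      ∃ A : Subgroup H, IsMulCommutative A ∧ A.index ≤ J) :
    ∀ H : Subgroup G, Finite H →
      ∃ A : Subgroup H, IsMulCommutative A ∧ A.index ≤ b * J := by
  intro H hHfin
  -- K : kernel of g restricted to H
  set gH : H →* G₂ := g.comp H.subtype with hgH
  set K : Subgroup H := gH.ker with hK
  -- K.index ≤ b
  have hKindex : K.index ≤ b := by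
    rw [hK, Subgroup.index_ker]
    exact hBd gH.range (Set.Finite.to_subtype (Set.finite_range gH))
  -- the map from K to G₁
  have hmem : ∀ k : K, ((k : H) : G) ∈ f.range := by
    intro k
    rw [hexact, MonoidHom.mem_ker]
    exact k.2
  let φ : K →* f.range :=
    MonoidHom.codRestrict (H.subtype.comp K.subtype) f.range hmem
  have hφinj : Function.Injective φ := by
    intro x y hxy
    have h1 : (φ x : G) = (φ y : G) := congrArg Subtype.val hxy
    exact Subtype.ext (Subtype.ext h1)
  let ψ : K →* G₁ := (MulEquiv.symm (MonoidHom.ofInjective hf)).toMonoidHom.comp φ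
  have hψinj : Function.Injective ψ :=
    (MulEquiv.symm (MonoidHom.ofInjective hf)).injective.comp hφinj
  -- ψ.range is finite
  have : Finite K := inferInstance
  have hfin : Finite ψ.range := Set.Finite.to_subtype (Set.finite_range ψ)
  obtain ⟨A₁, hA₁comm, hA₁idx⟩ := hJ ψ.range hfin
  -- transport back along the isomorphism K ≃* ψ.range
  let e : K ≃* ψ.range := MonoidHom.ofInjective hψinj
  let A' : Subgroup K := A₁.comap e.toMonoidHom
  have hA'comm : IsMulCommutative A' := by
    have := hA₁comm
    exact A₁.comap_injective_isMulCommutative e.injective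
  have hA'idx : A'.index ≤ J := by
    have h := Subgroup.index_comap_of_surjective (f := e.toMonoidHom) A₁ e.surjective
    calc A'.index = A₁.index := h
      _ ≤ J := hA₁idx
  haveI := hA'comm
  refine ⟨A'.map K.subtype, inferInstance, ?_⟩
  rw [Subgroup.index_map_subtype]
  calc A'.index * K.index ≤ J * b := Nat.mul_le_mul hA'idx hKindex
    _ = b * J := Nat.mul_comm _ _
end

section
/- Let G be a group with a normal subgroup N such that Bd(N) = b < ∞ and G/N is abelian with Rk_f(G/N) ≤ r. Then every finite subgroup H of G contains an abelian subgroup of index at most b^(r·b + 1); in particular G is Jordan. -/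
open Subgroup

lemma myCentralizerIndex {Γ : Type*} [Group Γ] [Finite Γ] (K : Subgroup Γ)
    (hcomm : ∀ g h : Γ, g⁻¹ * h⁻¹ * g * h ∈ K) (x : Γ) :
    (Subgroup.centralizer {x}).index ≤ Nat.card K := by
  set C := Subgroup.centralizer ({x} : Set Γ) with hC
  have key : ∀ g : Γ, x⁻¹ * (g * x * g⁻¹) ∈ K := by
    intro g
    have := hcomm x g⁻¹
    simpa [mul_assoc] using this
  have hwd : ∀ g g' : Γ, g⁻¹ * g' ∈ C → g * x * g⁻¹ = g' * x * g'⁻¹ := by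
    intro g g' hgg'
    have e : x * (g⁻¹ * g') = (g⁻¹ * g') * x := Subgroup.mem_centralizer_iff.mp hgg' x rfl
    have := congrArg (fun z => g * z * g'⁻¹) e
    simpa [mul_assoc] using this
  let f : Γ ⧸ C → K := fun q => Quotient.liftOn' q (fun g => (⟨x⁻¹ * (g * x * g⁻¹), key g⟩ : K))
    (by
      intro g g' h
      have := hwd g g' (QuotientGroup.leftRel_apply.mp h)
      exact Subtype.ext (by simp only []; rw [this]))
  have hfinj : Function.Injective f := by
    intro q q'
    induction q using Quotient.inductionOn' with
    | h g =>
    induction q' using Quotient.inductionOn' with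
    | h g' =>
    intro he
    have he' : x⁻¹ * (g * x * g⁻¹) = x⁻¹ * (g' * x * g'⁻¹) := congrArg Subtype.val he
    have he2 : g * x * g⁻¹ = g' * x * g'⁻¹ := by
      have := congrArg (fun z => x * z) he'
      simpa [mul_assoc] using this
    refine Quotient.sound' (QuotientGroup.leftRel_apply.mpr ?_)
    refine Subgroup.mem_centralizer_iff.mpr ?_
    intro y hy
    rcases hy with rfl
    have := congrArg (fun z => g⁻¹ * z * g') he2
    simpa [mul_assoc] using this
  calc C.index = Nat.card (Γ ⧸ C) := Subgroup.index_eq_card C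
    _ ≤ Nat.card K := Nat.card_le_card_of_injective f hfinj

lemma myCentralizerFinset {Γ : Type*} [Group Γ] [Finite Γ] (K : Subgroup Γ) (b : ℕ)
    (hK : Nat.card K ≤ b)
    (hcomm : ∀ g h : Γ, g⁻¹ * h⁻¹ * g * h ∈ K) (S : Finset Γ) :
    ∃ A : Subgroup Γ, (∀ g, g ∈ A ↔ ∀ x ∈ S, x * g = g * x) ∧ A.index ≤ b ^ S.card := by
  classical
  induction S using Finset.induction with
  | empty =>
    exact ⟨⊤, by simp, by simp [Subgroup.index_top]⟩
  | @insert z S hz ih =>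
    obtain ⟨A, hmem, hidx⟩ := ih
    refine ⟨Subgroup.centralizer {z} ⊓ A, ?_, ?_⟩
    · intro g
      rw [Subgroup.mem_inf, Subgroup.mem_centralizer_iff]
      constructor
      · rintro ⟨h1, h2⟩ y hy
        rcases Finset.mem_insert.mp hy with rfl | hy
        · exact h1 y rfl
        · exact (hmem g).mp h2 y hy
      · intro h
        exact ⟨fun y hy => by rcases hy with rfl; exact h _ (Finset.mem_insert_self _ S),
          (hmem g).mpr fun y hy => h y (Finset.mem_insert_of_mem hy)⟩
    · calc (Subgroup.centralizer {z} ⊓ A).index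
          ≤ (Subgroup.centralizer {z}).index * A.index := Subgroup.index_inf_le
        _ ≤ b * b ^ S.card := Nat.mul_le_mul (le_trans (myCentralizerIndex K hcomm z) hK) hidx
        _ = b ^ (insert z S).card := by rw [Finset.card_insert_of_notMem hz, pow_succ, mul_comm]

/-- Let `G` have a normal subgroup `N` whose finite subgroups have order at most `b`, and
with `G/N` abelian such that every finite subgroup of `G/N` is generated by at most `r`
elements. Then every finite subgroup of `G` contains an abelian subgroup of index at most
`b ^ (r * b + 1)`; in particular `G` is Jordan. -/
theorem stmt15 (G : Type*) [Group G] (N : Subgroup G) [N.Normal] (b r : ℕ)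
    (hBd : ∀ F : Subgroup N, Finite F → Nat.card F ≤ b)
    (hab : ∀ x y : G ⧸ N, x * y = y * x)
    (hRk : ∀ A : Subgroup (G ⧸ N), Finite A →
      ∃ s : Finset (G ⧸ N), s.card ≤ r ∧ Subgroup.closure (s : Set (G ⧸ N)) = A) :
    ∀ H : Subgroup G, Finite H →
      ∃ A : Subgroup H, IsMulCommutative A ∧ A.index ≤ b ^ (r * b + 1) := by
  intro H hH
  classical
  have hb1 : 1 ≤ b := by
    have := hBd ⊥ inferInstance
    simpa [Subgroup.card_bot] using this
  set K : Subgroup ↥H := N.subgroupOf H with hKdef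
  have e1 : Nat.card K = Nat.card ((H ⊓ N : Subgroup G)) := by
    rw [hKdef, ← Subgroup.inf_subgroupOf_left N H]
    exact Nat.card_congr (Subgroup.subgroupOfEquivOfLe inf_le_left).toEquiv
  have e2 : Nat.card ((H ⊓ N).subgroupOf N) = Nat.card ((H ⊓ N : Subgroup G)) :=
    Nat.card_congr (Subgroup.subgroupOfEquivOfLe inf_le_right).toEquiv
  have hfinHN : Finite ((H ⊓ N : Subgroup G)) :=
    Finite.of_injective (Subgroup.inclusion inf_le_left) (Subgroup.inclusion_injective _)
  have hfin2 : Finite ((H ⊓ N).subgroupOf N) :=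
    Finite.of_equiv _ (Subgroup.subgroupOfEquivOfLe inf_le_right).toEquiv.symm
  have hcardK : Nat.card K ≤ b := by
    rw [e1, ← e2]; exact hBd _ hfin2
  have habc : ∀ a c : G ⧸ N, a⁻¹ * c⁻¹ * a * c = 1 := by
    intro a c
    rw [mul_assoc, hab a c, ← mul_assoc]
    simp [mul_assoc]
  have hcomm : ∀ g h : ↥H, g⁻¹ * h⁻¹ * g * h ∈ K := by
    intro g h
    rw [hKdef, Subgroup.mem_subgroupOf]
    rw [← QuotientGroup.eq_one_iff]
    push_cast
    rw [QuotientGroup.mk_mul, QuotientGroup.mk_mul, QuotientGroup.mk_mul,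
      QuotientGroup.mk_inv, QuotientGroup.mk_inv]
    exact habc _ _
  let φ : ↥H →* G ⧸ N := (QuotientGroup.mk' N).comp H.subtype
  have hker : ∀ g : ↥H, φ g = 1 ↔ g ∈ K := by
    intro g
    rw [hKdef, Subgroup.mem_subgroupOf]
    exact QuotientGroup.eq_one_iff _
  have hfinR : Finite φ.range := Finite.of_surjective _ φ.rangeRestrict_surjective
  obtain ⟨s, hscard, hclos⟩ := hRk φ.range hfinR
  have hsub : ∀ x ∈ s, x ∈ φ.range := fun x hx => hclos ▸ Subgroup.subset_closure hx
  choose t ht using fun x : s => MonoidHom.mem_range.mp (hsub x x.2)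
  set T : Finset ↥H := Finset.univ.image t with hT
  have hTcard : T.card ≤ r := by
    calc T.card ≤ (Finset.univ : Finset {x // x ∈ s}).card := Finset.card_image_le
      _ = s.card := by rw [Finset.card_univ, Fintype.card_coe]
      _ ≤ r := hscard
  have KSfin : (K : Set ↥H).Finite := Set.toFinite _
  set KS : Finset ↥H := KSfin.toFinset with hKS
  have hKScard : KS.card ≤ b := by
    have h1 : Nat.card K = KS.card := Nat.card_eq_card_finite_toFinset KSfin
    rw [← h1]; exact hcardK
  have hgen : Subgroup.closure ((KS ∪ T : Finset ↥H) : Set ↥H) = ⊤ := by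
    rw [eq_top_iff]
    intro g _
    set P := Subgroup.closure ((KS ∪ T : Finset ↥H) : Set ↥H) with hP
    have hKP : ∀ k : ↥H, k ∈ K → k ∈ P := by
      intro k hk
      apply Subgroup.subset_closure
      rw [Finset.coe_union]
      exact Or.inl (by rw [hKS]; simpa [Set.Finite.mem_toFinset] using hk)
    have hTP : ∀ x : {x // x ∈ s}, t x ∈ P := by
      intro x
      apply Subgroup.subset_closure
      rw [Finset.coe_union]
      exact Or.inr (by simp [hT])
    have hgQ : φ g ∈ Subgroup.map φ P := by
      have hgr : φ g ∈ φ.range := ⟨g, rfl⟩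
      rw [← hclos] at hgr
      refine (Subgroup.closure_le _).mpr ?_ hgr
      intro x hx
      exact Subgroup.mem_map.mpr ⟨t ⟨x, hx⟩, hTP ⟨x, hx⟩, ht ⟨x, hx⟩⟩
    obtain ⟨p, hp, hpg⟩ := Subgroup.mem_map.mp hgQ
    have hkerm : p⁻¹ * g ∈ K := by
      rw [← hker, map_mul, map_inv, hpg]
      simp
    have hgp : g = p * (p⁻¹ * g) := by group
    rw [hgp]
    exact P.mul_mem hp (hKP _ hkerm)
  by_cases hr : r = 0
  · subst hr
    have hs0 : s = ∅ := Finset.card_eq_zero.mp (le_antisymm hscard (Nat.zero_le _))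
    have hK_top : ∀ g : ↥H, g ∈ K := by
      intro g
      rw [← hker]
      have hgr : φ g ∈ φ.range := ⟨g, rfl⟩
      rw [← hclos, hs0] at hgr
      simpa using hgr
    refine ⟨⊥, ⟨⟨fun p q => Subtype.ext (by
      simp [Subgroup.mem_bot.mp p.2, Subgroup.mem_bot.mp q.2])⟩⟩, ?_⟩
    rw [Subgroup.index_bot]
    have hinj : Nat.card ↥H ≤ Nat.card K :=
      Nat.card_le_card_of_injective (fun g => (⟨g, hK_top g⟩ : K))
        (fun a c hac => congrArg Subtype.val hac)
    calc Nat.card ↥H ≤ b := hinj.trans hcardK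
      _ = b ^ (0 * b + 1) := by simp
  · obtain ⟨A, hmemA, hidxA⟩ := myCentralizerFinset K b hcardK hcomm (KS ∪ T)
    refine ⟨A, ?_, ?_⟩
    · have hcentral : ∀ a : ↥H, a ∈ A → ∀ g : ↥H, g * a = a * g := by
        intro a ha g
        have hg : g ∈ Subgroup.closure ((KS ∪ T : Finset ↥H) : Set ↥H) := by
          rw [hgen]; trivial
        induction hg using Subgroup.closure_induction with
        | mem x hx => exact (hmemA a).mp ha x (Finset.mem_coe.mp hx)
        | one => simp
        | mul x y hxm hym hx hy => rw [mul_assoc, hy, ← mul_assoc, hx, mul_assoc]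
        | inv x hxm hx =>
          have h2 : x⁻¹ * (x * a) * x⁻¹ = x⁻¹ * (a * x) * x⁻¹ := by rw [hx]
          simpa [mul_assoc] using h2.symm
      exact ⟨⟨fun p q => Subtype.ext (hcentral q q.2 p)⟩⟩
    · refine hidxA.trans (Nat.pow_le_pow_right hb1 ?_)
      have h1 : (KS ∪ T).card ≤ KS.card + T.card := Finset.card_union_le _ _
      have h2 : KS.card + T.card ≤ b + r := Nat.add_le_add hKScard hTcard
      have hr1 : 1 ≤ r := Nat.one_le_iff_ne_zero.mpr hr
      calc (KS ∪ T).card ≤ b + r := h1.trans h2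
        _ ≤ r * b + 1 := by nlinarith
end

section
/- If p is a prime and G is a p-Jordan group with constants (J', e), then any quotient of G by a finite normal subgroup whose order is a power of p is also p-Jordan, with constants depending only on (J', e) and the order of the kernel. -/
/-- `G` is `p`-Jordan with constants `(J, e)`: every finite subgroup `Γ` of `G` contains a
normal abelian subgroup of order coprime to `p` and of index at most `J * |Γ⁽ᵖ⁾|^e`, where
`|Γ⁽ᵖ⁾| = p ^ ((Nat.card Γ).factorization p)` is the order of a `p`-Sylow subgroup of `Γ`. -/
def PJordan (p : ℕ) (G : Type*) [Group G] (J e : ℕ) : Prop :=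
  ∀ Γ : Subgroup G, Finite Γ →
    ∃ A : Subgroup Γ, A.Normal ∧ IsMulCommutative A ∧ ¬ p ∣ Nat.card A ∧
      A.index ≤ J * (p ^ (Nat.card Γ).factorization p) ^ e

/-- If `G` is `p`-Jordan with constants `(J, e)`, then the quotient of `G` by any finite
normal subgroup of `p`-power order `m` is `p`-Jordan, with constants depending only on
`(J, e)` and `m`. -/
theorem stmt18 (p J e m : ℕ) (hp : p.Prime) (hm : ∃ k : ℕ, m = p ^ k) :
    ∃ J₂ e₂ : ℕ, ∀ (G : Type) [inst : Group G] (N : Subgroup G) (_ : N.Normal),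
      PJordan p G J e → Finite N → Nat.card N = m →
        PJordan p (G ⧸ N) J₂ e₂ := by
  obtain ⟨k, hk⟩ := hm
  refine ⟨J * m ^ e, e, ?_⟩
  intro G _ N hN hJor hNfin hcardN Γ hΓfin
  set π := QuotientGroup.mk' N with hπ
  have hπsurj : Function.Surjective π := QuotientGroup.mk'_surjective N
  set Γ' := Γ.comap π with hΓ'
  have hNle : N ≤ Γ' := by
    intro n hn
    have h1 : π n = 1 := (QuotientGroup.eq_one_iff n).2 hn
    exact Subgroup.mem_comap.2 (by rw [h1]; exact Γ.one_mem)
  let f : Γ' →* Γ := (π.comp Γ'.subtype).codRestrict Γ (fun x => x.2)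
  have hfsurj : Function.Surjective f := by
    rintro ⟨y, hy⟩
    obtain ⟨g, rfl⟩ := hπsurj y
    exact ⟨⟨g, hy⟩, rfl⟩
  have hker : f.ker = N.subgroupOf Γ' := by
    ext x
    simp only [f, MonoidHom.mem_ker, Subgroup.mem_subgroupOf, Subtype.ext_iff,
      MonoidHom.codRestrict_apply, MonoidHom.comp_apply, Subgroup.coe_subtype,
      Subgroup.coe_one, hπ, QuotientGroup.mk'_apply]
    exact QuotientGroup.eq_one_iff _
  have hkerfin : Finite f.ker := by
    rw [hker]
    exact Finite.of_equiv N (Subgroup.subgroupOfEquivOfLe hNle).symm.toEquiv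
  have hcardker : Nat.card f.ker = m := by
    rw [hker, Nat.card_congr (Subgroup.subgroupOfEquivOfLe hNle).toEquiv, hcardN]
  have hquotequiv : (Γ' ⧸ f.ker) ≃ Γ :=
    (QuotientGroup.quotientKerEquivOfSurjective f hfsurj).toEquiv
  have hΓ'fin : Finite Γ' := by
    have : Finite (Γ' ⧸ f.ker) := Finite.of_equiv Γ hquotequiv.symm
    exact Finite.of_equiv _ (Subgroup.groupEquivQuotientProdSubgroup (s := f.ker)).symm
  have hcardΓ' : Nat.card Γ' = Nat.card Γ * m := by
    rw [Subgroup.card_eq_card_quotient_mul_card_subgroup f.ker,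
      Nat.card_congr hquotequiv, hcardker]
  obtain ⟨A, hAnorm, hAcomm, hAp, hAidx⟩ := hJor Γ' hΓ'fin
  have hinj : Function.Injective (f.subgroupMap A) := by
    rw [← MonoidHom.ker_eq_bot_iff, eq_bot_iff]
    intro x hx
    have hx1 : f (A.subtype x) = 1 := by
      have := congrArg (Subgroup.subtype _) hx
      simpa using congrArg (fun y => (y : Γ)) (Subtype.ext_iff.1 hx)
    have hxker : (A.subtype x) ∈ f.ker := hx1
    have hord1 : orderOf (A.subtype x) ∣ m := by
      rw [← hcardker]
      have : orderOf (⟨A.subtype x, hxker⟩ : f.ker) ∣ Nat.card f.ker :=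
        orderOf_dvd_natCard _
      simpa [orderOf_injective f.ker.subtype f.ker.subtype_injective] using this
    have hord2 : orderOf (A.subtype x) ∣ Nat.card A := by
      rw [orderOf_injective A.subtype A.subtype_injective x]
      exact orderOf_dvd_natCard x
    have : ¬ p ∣ orderOf (A.subtype x) := fun h => hAp (h.trans hord2)
    obtain ⟨j, hj, hjeq⟩ := (Nat.dvd_prime_pow hp).1 (hk ▸ hord1)
    have hj0 : j = 0 := by
      by_contra h0
      exact this (hjeq ▸ dvd_pow_self p h0)
    have hordone : orderOf (A.subtype x) = 1 := by rw [hjeq, hj0, pow_zero]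
    have hx1' : A.subtype x = 1 := orderOf_eq_one_iff.1 hordone
    have : x = 1 := A.subtype_injective (by simpa using hx1')
    simp [this]
  haveI : Finite A := Subgroup.instFiniteSubtypeMem A
  have hcardB : Nat.card (A.map f) = Nat.card A :=
    (Nat.card_eq_of_bijective (f.subgroupMap A)
      ⟨hinj, f.subgroupMap_surjective A⟩).symm
  refine ⟨A.map f, hAnorm.map f hfsurj, ?_, ?_, ?_⟩
  · haveI := hAcomm
    infer_instance
  · rw [hcardB]; exact hAp
  · -- index bound
    have h1 : (A.map f).index * Nat.card (A.map f) = Nat.card Γ :=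
      Subgroup.index_mul_card (A.map f)
    have h2 : A.index * Nat.card A = Nat.card Γ' := Subgroup.index_mul_card A
    have hApos : 0 < Nat.card A := Nat.card_pos
    have hAeq : A.index = (A.map f).index * m := by
      have : A.index * Nat.card A = ((A.map f).index * m) * Nat.card A := by
        rw [h2, hcardΓ', ← h1, hcardB]; ring
      exact Nat.eq_of_mul_eq_mul_right hApos this
    have hmpos : 0 < m := by rw [hk]; exact pow_pos hp.pos k
    have hBle : (A.map f).index ≤ A.index := by
      rw [hAeq]; exact Nat.le_mul_of_pos_right _ hmpos
    have hfact : (Nat.card Γ').factorization p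
        = (Nat.card Γ).factorization p + k := by
      rw [hcardΓ', hk, Nat.factorization_mul (Nat.card_pos.ne') (pow_ne_zero k hp.pos.ne')]
      simp [Nat.Prime.factorization_pow hp]
    calc (A.map f).index ≤ A.index := hBle
      _ ≤ J * (p ^ (Nat.card Γ').factorization p) ^ e := hAidx
      _ = J * m ^ e * (p ^ (Nat.card Γ).factorization p) ^ e := by
          rw [hfact, pow_add, hk]; ring
end
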